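/- arXiv:1605.06250 — 2 statements merged into one kernel-verified Lean document; each statement's English description precedes it below -/
import Mathlib

section
/- Let ρ > 1, μ ∈ (0,1], let I be an open interval containing [p₁,p₂], and p₀ ∈ I. Suppose ψ ∈ C¹(I) ∩ C²(I∖{p₀}) with ψ'(p) = |p−p₀|^{ρ−1} ψ̃(p) for all p ∈ I, where |ψ̃| is continuous and nonvanishing on I, and ψ' is monotone on {p ∈ I : p < p₀} and on {p ∈ I : p > p₀}. Suppose U : (p₁,p₂] → ℂ satisfies U(p) = (p−p₁)^{μ−1} ũ(p) with ũ continuous on [p₁,p₂], differentiable on (p₁,p₂), ũ' ∈ L¹(p₁,p₂), and ũ(p₁) ≠ 0 if μ ≠ 1. Then for all ω > 0, |∫_{p₁}^{p₂} U(p) e^{iωψ(p)} dp| ≤ C(U,ψ) ω^{−μ/ρ}, where C(U,ψ) = (3/μ)‖ũ‖_{L^∞(p₁,p₂)} + (8‖ũ‖_{L^∞(p₁,p₂)} + 2‖ũ'‖_{L¹(p₁,p₂)}) (min_{[p₁,p₂]}|ψ̃|)^{−1}. -/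
/-!
Put `δ = ω ^ (-1/ρ)`. On `[p₁, p₁ + δ]` the integrand is bounded crudely by
`‖ũ‖∞ (p - p₁)^(μ-1)`, which integrates to `‖ũ‖∞ δ^μ / μ`. Beyond `p₁ + δ` the amplitude is
at most `‖ũ‖∞ δ^(μ-1)`, so the part within `δ` of `p₀` (length `≤ 2δ`) contributes
`≤ 2 ‖ũ‖∞ δ^μ`. On the remaining (at most two) intervals `ψ'` is monotone with
`|ψ'| ≥ m δ^(ρ-1)`, `m = min |ψ̃|`, so van der Corput's first-derivative estimate (integrate by
parts against `1/ψ'`, which is monotone) bounds every partial integral of `exp (i ω ψ)` by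
`2 / (ω m δ^(ρ-1)) = 2δ/m`. An Abel summation against the amplitude, whose total variation
there is at most `δ^(μ-1) (‖ũ‖∞ + ‖ũ'‖₁)`, finishes the estimate. Every piece is a multiple of
`δ^μ = ω^(-μ/ρ)`.
-/

open MeasureTheory intervalIntegral Set

lemma abs_add_abs_add_abs_sub_le {a b r : ℝ} (hab : 0 ≤ a * b) (ha : |a| ≤ r) (hb : |b| ≤ r) :
    |a| + |b| + |a - b| ≤ 2 * r := by
  rcases le_total 0 a with h0a | ha0 <;> rcases le_total 0 b with h0b | hb0 <;>
    rcases le_total a b with hle | hle <;>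
    simp only [abs_of_nonneg, abs_of_nonpos, sub_nonneg, sub_nonpos, *] at ha hb ⊢ <;>
    nlinarith

lemma inv_le_inv_of_le_of_mul_pos {a b : ℝ} (hab : a ≤ b) (h : 0 < a * b) : b⁻¹ ≤ a⁻¹ := by
  rcases mul_pos_iff.1 h with ⟨ha, -⟩ | ⟨-, hb⟩
  · exact inv_anti₀ ha hab
  · exact (inv_le_inv_of_neg hb (hab.trans_lt hb)).2 hab

lemma max_min_sub_max_min_le {q p x y : ℝ} (hxy : x ≤ y) :
    max q (min p y) - max q (min p x) ≤ y - x := by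
  grind

lemma max_min_le_of_lt_max_min {q p x : ℝ} (h : q < max q (min p x)) :
    max q (min p x) ≤ x := by
  grind

lemma le_max_min_of_max_min_lt {q p x : ℝ} (h : max q (min p x) < p) :
    x ≤ max q (min p x) := by
  grind

lemma ContinuousOn.mul_pos_of_ne_zero {f : ℝ → ℝ} {s : Set ℝ} (hs : IsPreconnected s)
    (hf : ContinuousOn f s) (hf0 : ∀ p ∈ s, f p ≠ 0) {p q : ℝ} (hp : p ∈ s) (hq : q ∈ s) :
    0 < f p * f q := by
  have hsq : EqOn (f ^ 2) ((fun p => |f p|) ^ 2) s := fun p _ => by simp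
  have hpos := mul_pos (abs_pos.2 (hf0 p hp)) (abs_pos.2 (hf0 q hq))
  rcases hs.eq_or_eq_neg_of_sq_eq hf hf.abs hsq (fun hx => abs_ne_zero.2 (hf0 _ hx)) with h | h
  · rwa [h hp, h hq]
  · rwa [h hp, h hq, Pi.neg_apply, Pi.neg_apply, neg_mul_neg]

lemma norm_le_iSup_of_continuousOn {f : ℝ → ℂ} {s : Set ℝ} (hs : IsCompact s)
    (hf : ContinuousOn f s) {p : ℝ} (hp : p ∈ s) : ‖f p‖ ≤ ⨆ q : s, ‖f q‖ := by
  obtain ⟨C, hC⟩ := hs.exists_bound_of_continuousOn hf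
  exact le_ciSup ⟨C, by rintro _ ⟨q, rfl⟩; exact hC q q.2⟩ (⟨p, hp⟩ : s)

lemma iInf_le_of_nonneg {g : ℝ → ℝ} {s : Set ℝ} (hg : ∀ p ∈ s, 0 ≤ g p) {p : ℝ} (hp : p ∈ s) :
    ⨅ q : s, g q ≤ g p :=
  ciInf_le ⟨0, by rintro _ ⟨q, rfl⟩; exact hg q q.2⟩ (⟨p, hp⟩ : s)

lemma iInf_pos_of_continuousOn {g : ℝ → ℝ} {s : Set ℝ} (hs : IsCompact s) (hne : s.Nonempty)
    (hg : ContinuousOn g s) (hg0 : ∀ p ∈ s, 0 < g p) : 0 < ⨅ q : s, g q := by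
  obtain ⟨p, hp, hmin⟩ := hs.exists_isMinOn hne hg
  have : Nonempty s := hne.to_subtype
  exact (hg0 p hp).trans_le (le_ciInf fun q => hmin q.2)

lemma norm_cexp_I_mul_ofReal_mul (ω t : ℝ) : ‖Complex.exp (Complex.I * ω * t)‖ = 1 := by
  rw [mul_assoc, ← Complex.ofReal_mul, Complex.norm_exp_I_mul_ofReal]

lemma continuousOn_cexp_I_mul_ofReal_mul {ψ : ℝ → ℝ} {s : Set ℝ} {ω : ℝ}
    (hψ : ContinuousOn ψ s) : ContinuousOn (fun p => Complex.exp (Complex.I * ω * ψ p)) s :=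
  Complex.continuous_exp.comp_continuousOn
    (continuousOn_const.mul (Complex.continuous_ofReal.comp_continuousOn hψ))

lemma HasDerivAt.cexp_I_mul_ofReal_mul_div {ψ : ℝ → ℝ} {ψ' ω p : ℝ} (hψ : HasDerivAt ψ ψ' p)
    (hω : ω ≠ 0) :
    HasDerivAt (fun q => Complex.exp (Complex.I * ω * ψ q) / (Complex.I * ω))
      (ψ' * Complex.exp (Complex.I * ω * ψ p)) p := by
  have hω' : (ω : ℂ) ≠ 0 := by exact_mod_cast hω
  refine ((hψ.ofReal_comp.const_mul (Complex.I * ω)).cexp.div_const _).congr_deriv ?_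
  field_simp

lemma MonotoneOn.integral_abs_deriv_le {f : ℝ → ℝ} {a b : ℝ} (hab : a ≤ b)
    (hf : MonotoneOn f (Icc a b)) :
    ∫ x in a..b, |deriv f x| ≤ f b - f a := by
  have hnonneg : ∀ x ∈ Ioo a b, 0 ≤ deriv f x := fun x hx => by
    rw [← derivWithin_of_mem_nhds (Icc_mem_nhds hx.1 hx.2)]
    exact hf.derivWithin_nonneg
  have heq : ∫ x in a..b, |deriv f x| = ∫ x in a..b, deriv f x := by
    simp only [integral_of_le hab, integral_Ioc_eq_integral_Ioo]
    exact setIntegral_congr_fun measurableSet_Ioo fun x hx => abs_of_nonneg (hnonneg x hx)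
  have hfab : f a ≤ f b := hf (left_mem_Icc.2 hab) (right_mem_Icc.2 hab) hab
  rw [heq, ← uIcc_of_le hab] at *
  exact hf.intervalIntegral_deriv_mem_uIcc.2.trans_eq (max_eq_right (sub_nonneg.2 hfab))

lemma intervalIntegrable_deriv_of_monotoneOn_or_antitoneOn {f : ℝ → ℝ} {a b : ℝ} (hab : a ≤ b)
    (hf : MonotoneOn f (Icc a b) ∨ AntitoneOn f (Icc a b)) :
    IntervalIntegrable (deriv f) volume a b := by
  rw [← uIcc_of_le hab] at hf
  rcases hf with hf | hf
  · exact hf.intervalIntegrable_deriv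
  · have hneg : deriv f = -deriv (fun x => -f x) := by ext; simp
    exact hneg ▸ hf.neg.intervalIntegrable_deriv.neg

lemma integral_abs_deriv_le_abs_sub {f : ℝ → ℝ} {a b : ℝ} (hab : a ≤ b)
    (hf : MonotoneOn f (Icc a b) ∨ AntitoneOn f (Icc a b)) :
    ∫ x in a..b, |deriv f x| ≤ |f b - f a| := by
  rcases hf with hf | hf
  · exact (hf.integral_abs_deriv_le hab).trans (le_abs_self _)
  · simpa [abs_sub_comm, neg_add_eq_sub] using
      (hf.neg.integral_abs_deriv_le hab).trans (le_abs_self _)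

theorem norm_integral_cexp_le_of_inv_deriv {ψ ψ' h : ℝ → ℝ} {c x ω : ℝ} (hcx : c ≤ x)
    (hω : 0 < ω) (hψ : ∀ p ∈ Icc c x, HasDerivAt ψ (ψ' p) p) (hψ'c : ContinuousOn ψ' (Icc c x))
    (hhψ' : ∀ p ∈ Icc c x, h p * ψ' p = 1) (hhc : ContinuousOn h (Icc c x))
    (hhd : ∀ p ∈ Ioo c x, HasDerivAt h (deriv h p) p)
    (hh : MonotoneOn h (Icc c x) ∨ AntitoneOn h (Icc c x)) :
    ‖∫ p in c..x, Complex.exp (Complex.I * ω * ψ p)‖ ≤ (|h x| + |h c| + |h x - h c|) / ω := by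
  set E : ℝ → ℂ := fun p => Complex.exp (Complex.I * ω * ψ p)
  set v : ℝ → ℂ := fun p => E p / (Complex.I * ω)
  have hψc : ContinuousOn ψ (Icc c x) := fun p hp => (hψ p hp).continuousAt.continuousWithinAt
  have hEc : ContinuousOn E (Icc c x) := continuousOn_cexp_I_mul_ofReal_mul hψc
  have hh'i := intervalIntegrable_deriv_of_monotoneOn_or_antitoneOn hcx hh
  have hIBP := integral_smul_deriv_eq_deriv_smul_of_hasDerivAt (u := h) (v := v)
    (v' := fun p => ψ' p * E p) (uIcc_of_le hcx ▸ hhc) (uIcc_of_le hcx ▸ hEc.div_const _)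
    (by rwa [min_eq_left hcx, max_eq_right hcx])
    (by
      rw [min_eq_left hcx, max_eq_right hcx]
      exact fun p hp => (hψ p (Ioo_subset_Icc_self hp)).cexp_I_mul_ofReal_mul_div hω.ne')
    hh'i (((Complex.continuous_ofReal.comp_continuousOn hψ'c).mul hEc).intervalIntegrable_of_Icc
      hcx)
  have hE_eq : ∫ p in c..x, E p = ∫ p in c..x, h p • ((ψ' p : ℂ) * E p) :=
    integral_congr fun p hp => by
      rw [Complex.real_smul, ← mul_assoc, ← Complex.ofReal_mul, hhψ' p (uIcc_of_le hcx ▸ hp),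
        Complex.ofReal_one, one_mul]
  have hv_norm : ∀ p, ‖v p‖ = ω⁻¹ := fun p => by
    rw [norm_div, norm_cexp_I_mul_ofReal_mul, norm_mul, Complex.norm_I, Complex.norm_real,
      Real.norm_of_nonneg hω.le, one_mul, one_div]
  have hrem : ‖∫ p in c..x, deriv h p • v p‖ ≤ |h x - h c| / ω :=
    calc ‖∫ p in c..x, deriv h p • v p‖ ≤ ∫ p in c..x, |deriv h p| / ω :=
          norm_integral_le_of_norm_le hcx (ae_of_all _ fun p _ => by
              rw [norm_smul, hv_norm, Real.norm_eq_abs, div_eq_mul_inv])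
            (hh'i.abs.div_const _)
      _ = (∫ p in c..x, |deriv h p|) / ω := integral_div ω _
      _ ≤ |h x - h c| / ω := by gcongr; exact integral_abs_deriv_le_abs_sub hcx hh
  rw [hE_eq, hIBP]
  calc _ ≤ ‖h x • v x‖ + ‖h c • v c‖ + ‖∫ p in c..x, deriv h p • v p‖ :=
        (norm_sub_le _ _).trans (add_le_add_left (norm_sub_le _ _) _)
    _ ≤ (|h x| + |h c| + |h x - h c|) / ω := by
        rw [norm_smul, norm_smul, hv_norm, hv_norm, Real.norm_eq_abs, Real.norm_eq_abs,
          add_div, add_div, div_eq_mul_inv, div_eq_mul_inv]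
        gcongr

/-- Van der Corput's first-derivative estimate. -/
theorem norm_integral_cexp_le_of_monotoneOn_deriv {ψ ψ' : ℝ → ℝ} {c x ω κ : ℝ} (hcx : c ≤ x)
    (hω : 0 < ω) (hκ : 0 < κ) (hψ : ∀ p ∈ Icc c x, HasDerivAt ψ (ψ' p) p)
    (hψ'c : ContinuousOn ψ' (Icc c x)) (hψ'd : ∀ p ∈ Ioo c x, DifferentiableAt ℝ ψ' p)
    (hκψ' : ∀ p ∈ Icc c x, κ ≤ |ψ' p|)
    (hmono : MonotoneOn ψ' (Icc c x) ∨ AntitoneOn ψ' (Icc c x)) :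
    ‖∫ p in c..x, Complex.exp (Complex.I * ω * ψ p)‖ ≤ 2 / (ω * κ) := by
  have hψ'0 : ∀ p ∈ Icc c x, ψ' p ≠ 0 := fun p hp => abs_pos.1 (hκ.trans_le (hκψ' p hp))
  have hsign : ∀ p ∈ Icc c x, ∀ q ∈ Icc c x, 0 < ψ' p * ψ' q := fun p hp q hq =>
    hψ'c.mul_pos_of_ne_zero isPreconnected_Icc hψ'0 hp hq
  set h : ℝ → ℝ := fun p => (ψ' p)⁻¹ with h_def
  have hh : MonotoneOn h (Icc c x) ∨ AntitoneOn h (Icc c x) := by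
    rcases hmono with hm | hm
    · exact Or.inr fun p hp q hq hpq =>
        inv_le_inv_of_le_of_mul_pos (hm hp hq hpq) (hsign p hp q hq)
    · exact Or.inl fun p hp q hq hpq =>
        inv_le_inv_of_le_of_mul_pos (hm hp hq hpq) (hsign q hq p hp)
  have hh_le : ∀ p ∈ Icc c x, |h p| ≤ κ⁻¹ := fun p hp => by
    rw [abs_inv]
    exact inv_anti₀ hκ (hκψ' p hp)
  have hx : x ∈ Icc c x := right_mem_Icc.2 hcx
  have hc : c ∈ Icc c x := left_mem_Icc.2 hcx
  have hhxc : 0 ≤ h x * h c := by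
    rw [h_def, ← mul_inv]
    exact (inv_pos.2 (hsign x hx c hc)).le
  calc _ ≤ (|h x| + |h c| + |h x - h c|) / ω :=
        norm_integral_cexp_le_of_inv_deriv hcx hω hψ hψ'c (fun p hp => inv_mul_cancel₀ (hψ'0 p hp))
          (hψ'c.inv₀ hψ'0)
          (fun p hp => ((hψ'd p hp).inv (hψ'0 p (Ioo_subset_Icc_self hp))).hasDerivAt) hh
    _ ≤ 2 * κ⁻¹ / ω := by gcongr; exact abs_add_abs_add_abs_sub_le hhxc (hh_le x hx) (hh_le c hc)
    _ = 2 / (ω * κ) := by field_simp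

theorem norm_integral_cexp_le_of_contDiffOn {ψ : ℝ → ℝ} {s : Set ℝ} {c x ω κ : ℝ} (hcx : c ≤ x)
    (hω : 0 < ω) (hκ : 0 < κ) (hs : IsOpen s) (hsub : Icc c x ⊆ s) (hψ : ContDiffOn ℝ 2 ψ s)
    (hκψ' : ∀ p ∈ Icc c x, κ ≤ |deriv ψ p|)
    (hmono : MonotoneOn (deriv ψ) (Icc c x) ∨ AntitoneOn (deriv ψ) (Icc c x)) :
    ‖∫ p in c..x, Complex.exp (Complex.I * ω * ψ p)‖ ≤ 2 / (ω * κ) := by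
  have hψ' : ContDiffOn ℝ 1 (deriv ψ) s := hψ.deriv_of_isOpen hs (by norm_num)
  refine norm_integral_cexp_le_of_monotoneOn_deriv hcx hω hκ (fun p hp => ?_)
    (hψ'.continuousOn.mono hsub) (fun p hp => ?_) hκψ' hmono
  · exact ((hψ.differentiableOn (by norm_num)).differentiableAt
      (hs.mem_nhds (hsub hp))).hasDerivAt
  · exact (hψ'.differentiableOn one_ne_zero).differentiableAt
      (hs.mem_nhds (hsub (Ioo_subset_Icc_self hp)))

theorem norm_integral_mul_le_of_norm_integral_le {V V' E : ℝ → ℂ} {c d B : ℝ} (hcd : c ≤ d)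
    (hEc : ContinuousOn E (Icc c d)) (hB : ∀ x ∈ Icc c d, ‖∫ p in c..x, E p‖ ≤ B)
    (hVc : ContinuousOn V (Icc c d)) (hVd : ∀ p ∈ Ioo c d, HasDerivAt V (V' p) p)
    (hV' : IntervalIntegrable V' volume c d) :
    ‖∫ p in c..d, V p * E p‖ ≤ B * (‖V d‖ + ∫ p in c..d, ‖V' p‖) := by
  set F : ℝ → ℂ := fun x => ∫ p in c..x, E p
  have hEi : IntervalIntegrable E volume c d := hEc.intervalIntegrable_of_Icc hcd
  have hFc : ContinuousOn F (Icc c d) := by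
    rw [← uIcc_of_le hcd]
    exact continuousOn_primitive_interval' hEi left_mem_uIcc
  have hFd : ∀ p ∈ Ioo c d, HasDerivAt F (E p) p := fun p hp =>
    integral_hasDerivAt_right
      ((hEc.mono (Icc_subset_Icc_right hp.2.le)).intervalIntegrable_of_Icc hp.1.le)
      (ContinuousAt.stronglyMeasurableAtFilter isOpen_Ioo
        (fun q hq => hEc.continuousAt (Icc_mem_nhds hq.1 hq.2)) p hp)
      (hEc.continuousAt (Icc_mem_nhds hp.1 hp.2))
  have hIBP := integral_mul_deriv_eq_deriv_mul_of_hasDerivAt (u := V) (v := F)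
    (by rwa [uIcc_of_le hcd]) (by rwa [uIcc_of_le hcd])
    (by rwa [min_eq_left hcd, max_eq_right hcd]) (by rwa [min_eq_left hcd, max_eq_right hcd])
    hV' hEi
  rw [hIBP, show F c = 0 from integral_same, mul_zero, sub_zero]
  calc ‖V d * F d - ∫ p in c..d, V' p * F p‖
      ≤ ‖V d‖ * B + ∫ p in c..d, ‖V' p‖ * B := by
        refine (norm_sub_le _ _).trans (add_le_add ?_ ?_)
        · rw [norm_mul]
          exact mul_le_mul_of_nonneg_left (hB d (right_mem_Icc.2 hcd)) (norm_nonneg _)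
        · refine norm_integral_le_of_norm_le hcd (ae_of_all _ fun p hp => ?_)
            (hV'.norm.mul_const B)
          rw [norm_mul]
          exact mul_le_mul_of_nonneg_left (hB p (Ioc_subset_Icc_self hp)) (norm_nonneg _)
    _ = B * (‖V d‖ + ∫ p in c..d, ‖V' p‖) := by rw [intervalIntegral.integral_mul_const]; ring

theorem norm_mul_add_integral_norm_deriv_mul_le {r r' : ℝ → ℝ} {u u' : ℝ → ℂ} {c d M : ℝ}
    (hcd : c ≤ d) (hr : ∀ p ∈ Icc c d, HasDerivAt r (r' p) p) (hr'c : ContinuousOn r' (Icc c d))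
    (hr'0 : ∀ p ∈ Icc c d, r' p ≤ 0) (hrd : 0 ≤ r d)
    (hu' : IntervalIntegrable u' volume c d) (hM : ∀ p ∈ Icc c d, ‖u p‖ ≤ M) :
    ‖(r d : ℂ) * u d‖ + ∫ p in c..d, ‖(r' p : ℂ) * u p + r p * u' p‖ ≤
      r c * (M + ∫ p in c..d, ‖u' p‖) := by
  have hr_anti : AntitoneOn r (Icc c d) :=
    antitoneOn_of_deriv_nonpos (convex_Icc c d)
      (fun p hp => (hr p hp).continuousAt.continuousWithinAt)
      (fun p hp => (hr p (interior_subset hp)).differentiableAt.differentiableWithinAt)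
      (fun p hp => (hr p (interior_subset hp)).deriv ▸ hr'0 p (interior_subset hp))
  have hc : c ∈ Icc c d := left_mem_Icc.2 hcd
  have hd : d ∈ Icc c d := right_mem_Icc.2 hcd
  have hr_le : ∀ p ∈ Icc c d, 0 ≤ r p ∧ r p ≤ r c := fun p hp =>
    ⟨hrd.trans (hr_anti hp hd hp.2), hr_anti hc hp hp.1⟩
  have hr'i : IntervalIntegrable r' volume c d := hr'c.intervalIntegrable_of_Icc hcd
  have hvar : ∫ p in c..d, ‖(r' p : ℂ) * u p + r p * u' p‖ ≤
      ∫ p in c..d, (r c * ‖u' p‖ - r' p * M) := by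
    rw [integral_of_le hcd, integral_of_le hcd]
    refine integral_mono_of_nonneg (ae_of_all _ fun _ => norm_nonneg _)
      ((hu'.norm.const_mul _).sub (hr'i.mul_const M)).1
      ((ae_restrict_iff' measurableSet_Ioc).2 (ae_of_all _ fun p hp => ?_))
    have hp := Ioc_subset_Icc_self hp
    dsimp only
    rw [sub_eq_neg_add, ← neg_mul]
    refine (norm_add_le _ _).trans (add_le_add ?_ ?_)
    · rw [norm_mul, Complex.norm_real, Real.norm_of_nonpos (hr'0 p hp)]
      exact mul_le_mul_of_nonneg_left (hM p hp) (neg_nonneg.2 (hr'0 p hp))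
    · rw [norm_mul, Complex.norm_real, Real.norm_of_nonneg (hr_le p hp).1]
      exact mul_le_mul_of_nonneg_right (hr_le p hp).2 (norm_nonneg _)
  have hftc : ∫ p in c..d, r' p = r d - r c :=
    integral_eq_sub_of_hasDerivAt (fun p hp => hr p (uIcc_of_le hcd ▸ hp)) hr'i
  rw [intervalIntegral.integral_sub (hu'.norm.const_mul _) (hr'i.mul_const M),
    intervalIntegral.integral_mul_const, intervalIntegral.integral_const_mul, hftc] at hvar
  have hend : ‖(r d : ℂ) * u d‖ ≤ r d * M := by
    rw [norm_mul, Complex.norm_real, Real.norm_of_nonneg hrd]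
    exact mul_le_mul_of_nonneg_left (hM d hd) hrd
  linarith

theorem norm_integral_rpow_mul_le {μ p₁ c d δ M B : ℝ} {ut E : ℝ → ℂ}
    (hμ : μ ≤ 1) (hδ : 0 < δ) (hc : p₁ + δ ≤ c) (hcd : c ≤ d)
    (hEc : ContinuousOn E (Icc c d)) (hB : ∀ x ∈ Icc c d, ‖∫ p in c..x, E p‖ ≤ B)
    (hutc : ContinuousOn ut (Icc c d)) (hutd : ∀ p ∈ Ioo c d, DifferentiableAt ℝ ut p)
    (hutint : IntervalIntegrable (deriv ut) volume c d) (hM : ∀ p ∈ Icc c d, ‖ut p‖ ≤ M) :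
    ‖∫ p in c..d, ((p - p₁) ^ (μ - 1) : ℝ) * ut p * E p‖ ≤
      B * (δ ^ (μ - 1) * (M + ∫ p in c..d, ‖deriv ut p‖)) := by
  have hpos : ∀ p ∈ Icc c d, 0 < p - p₁ := fun p hp => by linarith [hp.1]
  set r : ℝ → ℝ := fun p => (p - p₁) ^ (μ - 1)
  set r' : ℝ → ℝ := fun p => (μ - 1) * (p - p₁) ^ (μ - 2)
  have hr : ∀ p ∈ Icc c d, HasDerivAt r (r' p) p := fun p hp => by
    refine (((hasDerivAt_id p).sub_const p₁).rpow_const (Or.inl (hpos p hp).ne')).congr_deriv ?_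
    rw [one_mul, sub_sub, one_add_one_eq_two, id]
  have hrc : ContinuousOn r (Icc c d) := fun p hp => (hr p hp).continuousAt.continuousWithinAt
  have hr'c : ContinuousOn r' (Icc c d) :=
    continuousOn_const.mul ((continuousOn_id.sub continuousOn_const).rpow_const
      fun p hp => Or.inl (hpos p hp).ne')
  have hV' : IntervalIntegrable (fun p => (r' p : ℂ) * ut p + r p * deriv ut p) volume c d :=
    (((Complex.continuous_ofReal.comp_continuousOn hr'c).mul hutc).intervalIntegrable_of_Icc
      hcd).add (hutint.continuousOn_mul
        (uIcc_of_le hcd ▸ Complex.continuous_ofReal.comp_continuousOn hrc))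
  have habel := norm_integral_mul_le_of_norm_integral_le hcd hEc hB
    ((Complex.continuous_ofReal.comp_continuousOn hrc).mul hutc)
    (fun p hp => ((hr p (Ioo_subset_Icc_self hp)).ofReal_comp).mul (hutd p hp).hasDerivAt) hV'
  have hvar := norm_mul_add_integral_norm_deriv_mul_le hcd hr hr'c
    (fun p hp => mul_nonpos_of_nonpos_of_nonneg (by linarith) (Real.rpow_nonneg (hpos p hp).le _))
    (Real.rpow_nonneg (hpos d (right_mem_Icc.2 hcd)).le _) hutint hM
  have hrc_le : r c ≤ δ ^ (μ - 1) :=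
    Real.rpow_le_rpow_of_nonpos hδ (by linarith) (by linarith)
  have hB0 : 0 ≤ B := (norm_nonneg _).trans (hB c (left_mem_Icc.2 hcd))
  calc _ ≤ B * (‖(r d : ℂ) * ut d‖ + ∫ p in c..d, ‖(r' p : ℂ) * ut p + r p * deriv ut p‖) :=
        habel
    _ ≤ B * (δ ^ (μ - 1) * (M + ∫ p in c..d, ‖deriv ut p‖)) := by
      refine mul_le_mul_of_nonneg_left (hvar.trans (mul_le_mul_of_nonneg_right hrc_le ?_)) hB0
      exact add_nonneg ((norm_nonneg _).trans (hM c (left_mem_Icc.2 hcd)))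
        (integral_nonneg hcd fun _ _ => norm_nonneg _)

lemma intervalIntegrable_sub_rpow {μ p₁ e : ℝ} (hμ : 0 < μ) :
    IntervalIntegrable (fun p => (p - p₁) ^ (μ - 1)) volume p₁ e := by
  simpa using (intervalIntegral.intervalIntegrable_rpow' (a := 0) (b := e - p₁)
    (r := μ - 1) (by linarith)).comp_sub_right p₁

theorem intervalIntegrable_rpow_mul {g : ℝ → ℂ} {μ p₁ c d : ℝ} (hμ : 0 < μ) (hc : p₁ ≤ c)
    (hcd : c ≤ d) (hg : ContinuousOn g (Icc c d)) :
    IntervalIntegrable (fun p => ((p - p₁) ^ (μ - 1) : ℝ) * g p) volume c d :=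
  have hint := (intervalIntegrable_sub_rpow (p₁ := p₁) (e := d) hμ).mono_set (by
    rw [uIcc_of_le hcd, uIcc_of_le (hc.trans hcd)]; exact Icc_subset_Icc_left hc)
  IntervalIntegrable.mul_continuousOn ⟨hint.1.ofReal, hint.2.ofReal⟩ (uIcc_of_le hcd ▸ hg)

theorem norm_integral_le_of_norm_le_rpow {f : ℝ → ℂ} {μ p₁ e M : ℝ} (hμ : 0 < μ) (he : p₁ ≤ e)
    (hf : ∀ p ∈ Ioc p₁ e, ‖f p‖ ≤ M * (p - p₁) ^ (μ - 1)) :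
    ‖∫ p in p₁..e, f p‖ ≤ M * (e - p₁) ^ μ / μ := by
  calc _ ≤ ∫ p in p₁..e, M * (p - p₁) ^ (μ - 1) :=
        norm_integral_le_of_norm_le he (ae_of_all _ hf)
          ((intervalIntegrable_sub_rpow hμ).const_mul M)
    _ = M * (e - p₁) ^ μ / μ := by
      rw [intervalIntegral.integral_const_mul,
        intervalIntegral.integral_comp_sub_right (fun t => t ^ (μ - 1)), sub_self,
        integral_rpow (Or.inl (by linarith)), sub_add_cancel, Real.zero_rpow hμ.ne']
      ring

theorem norm_integral_le_of_norm_le_rpow_of_add_le {f : ℝ → ℂ} {μ p₁ c d δ M : ℝ}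
    (hμ : μ ≤ 1) (hδ : 0 < δ) (hc : p₁ + δ ≤ c) (hcd : c ≤ d) (hlen : d - c ≤ 2 * δ)
    (hM : 0 ≤ M) (hf : ∀ p ∈ Ioc c d, ‖f p‖ ≤ M * (p - p₁) ^ (μ - 1)) :
    ‖∫ p in c..d, f p‖ ≤ 2 * M * δ ^ μ := by
  have hbound : ∀ p ∈ uIoc c d, ‖f p‖ ≤ M * δ ^ (μ - 1) := fun p hp => by
    rw [uIoc_of_le hcd] at hp
    exact (hf p hp).trans (mul_le_mul_of_nonneg_left
      (Real.rpow_le_rpow_of_nonpos hδ (by linarith [hp.1]) (by linarith)) hM)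
  calc _ ≤ M * δ ^ (μ - 1) * |d - c| := norm_integral_le_of_norm_le_const hbound
    _ ≤ M * δ ^ (μ - 1) * (2 * δ) := by
      rw [abs_of_nonneg (sub_nonneg.2 hcd)]
      gcongr
    _ = 2 * M * δ ^ μ := by rw [Real.rpow_sub_one hδ.ne']; field_simp

lemma norm_rpow_mul_mul_cexp_le {ψ : ℝ → ℝ} {ut : ℝ → ℂ} {μ p₁ ω M p : ℝ} (hp : p₁ ≤ p)
    (hM : ‖ut p‖ ≤ M) :
    ‖((p - p₁) ^ (μ - 1) : ℝ) * ut p * Complex.exp (Complex.I * ω * ψ p)‖ ≤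
      M * (p - p₁) ^ (μ - 1) := by
  have hr := Real.rpow_nonneg (sub_nonneg.2 hp) (μ - 1)
  rw [norm_mul, norm_cexp_I_mul_ofReal_mul, mul_one, norm_mul, Complex.norm_real,
    Real.norm_of_nonneg hr, mul_comm]
  exact mul_le_mul_of_nonneg_right hM hr

theorem integral_add_adjacent_intervals₃ {E : Type*} [NormedAddCommGroup E] [NormedSpace ℝ E]
    {f : ℝ → E} {a b c d : ℝ} (hab : a ≤ b) (hbc : b ≤ c) (hcd : c ≤ d)
    (hf : IntervalIntegrable f volume a d) :
    ∫ x in a..d, f x = (∫ x in a..b, f x) + (∫ x in b..c, f x) + ∫ x in c..d, f x := by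
  have hsub : ∀ {x y}, a ≤ x → x ≤ y → y ≤ d → IntervalIntegrable f volume x y :=
    fun hx hxy hy => hf.mono_set (by
      rw [uIcc_of_le hxy, uIcc_of_le (hx.trans (hxy.trans hy))]; exact Icc_subset_Icc hx hy)
  rw [integral_add_adjacent_intervals (hsub le_rfl hab (hbc.trans hcd)) (hsub hab hbc hcd),
    integral_add_adjacent_intervals (hsub le_rfl (hab.trans hbc) hcd)
      (hsub (hab.trans hbc) hcd le_rfl)]

/-- Assumption `(P_{p₀,ρ})` on `I = (a, b)` (with `ψt` for `ψ̃`), without the continuity and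
non-vanishing of `|ψ̃|`. -/
structure PhaseAssumption (ψ ψt : ℝ → ℝ) (a b p₀ ρ : ℝ) : Prop where
  contDiffOn_one : ContDiffOn ℝ 1 ψ (Ioo a b)
  contDiffOn_two : ContDiffOn ℝ 2 ψ (Ioo a b \ {p₀})
  deriv_eq : ∀ p ∈ Ioo a b, deriv ψ p = |p - p₀| ^ (ρ - 1) * ψt p
  mono_left : MonotoneOn (deriv ψ) {p ∈ Ioo a b | p < p₀} ∨
    AntitoneOn (deriv ψ) {p ∈ Ioo a b | p < p₀}
  mono_right : MonotoneOn (deriv ψ) {p ∈ Ioo a b | p₀ < p} ∨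
    AntitoneOn (deriv ψ) {p ∈ Ioo a b | p₀ < p}

namespace PhaseAssumption

variable {ψ ψt : ℝ → ℝ} {a b p₀ ρ : ℝ}

theorem norm_integral_cexp_le (hP : PhaseAssumption ψ ψt a b p₀ ρ) {c x ω δ m : ℝ}
    (hρ : 1 ≤ ρ) (hω : 0 < ω) (hδ : 0 < δ) (hωδ : ω * δ ^ ρ = 1) (hm : 0 < m)
    (hcx : c ≤ x) (hsub : Icc c x ⊆ Ioo a b) (hψt : ∀ p ∈ Icc c x, m ≤ |ψt p|)
    (hfar : x ≤ p₀ - δ ∨ p₀ + δ ≤ c) :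
    ‖∫ p in c..x, Complex.exp (Complex.I * ω * ψ p)‖ ≤ 2 * δ / m := by
  have hdist : ∀ p ∈ Icc c x, δ ≤ |p - p₀| := fun p hp => by
    rcases hfar with h | h
    · rw [abs_sub_comm]; exact (le_abs_self _).trans' (by linarith [hp.2])
    · exact (le_abs_self _).trans' (by linarith [hp.1])
  have hsub' : Icc c x ⊆ Ioo a b \ {p₀} := fun p hp =>
    ⟨hsub hp, fun h => by
      have := hdist p hp
      rw [mem_singleton_iff.1 h, sub_self, abs_zero] at this
      exact hδ.not_ge this⟩
  have hκ : ∀ p ∈ Icc c x, m * δ ^ (ρ - 1) ≤ |deriv ψ p| := fun p hp => by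
    rw [hP.deriv_eq p (hsub hp), abs_mul, abs_of_nonneg (by positivity), mul_comm]
    exact mul_le_mul (Real.rpow_le_rpow hδ.le (hdist p hp) (by linarith)) (hψt p hp) hm.le
      (by positivity)
  have hmono : MonotoneOn (deriv ψ) (Icc c x) ∨ AntitoneOn (deriv ψ) (Icc c x) := by
    rcases hfar with h | h
    · have hside : Icc c x ⊆ {p ∈ Ioo a b | p < p₀} := fun p hp =>
        ⟨hsub hp, by linarith [hp.2]⟩
      exact hP.mono_left.imp (·.mono hside) (·.mono hside)
    · have hside : Icc c x ⊆ {p ∈ Ioo a b | p₀ < p} := fun p hp =>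
        ⟨hsub hp, by linarith [hp.1]⟩
      exact hP.mono_right.imp (·.mono hside) (·.mono hside)
  have hωκ : ω * (m * δ ^ (ρ - 1)) = m / δ := by
    rw [Real.rpow_sub_one hδ.ne']
    linear_combination m / δ * hωδ
  calc _ ≤ 2 / (ω * (m * δ ^ (ρ - 1))) :=
        norm_integral_cexp_le_of_contDiffOn hcx hω (by positivity)
          (isOpen_Ioo.sdiff isClosed_singleton) hsub' hP.contDiffOn_two hκ hmono
    _ = 2 * δ / m := by rw [hωκ, div_div_eq_mul_div]

theorem norm_integral_rpow_mul_cexp_le (hP : PhaseAssumption ψ ψt a b p₀ ρ)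
    {μ p₁ c d ω δ m M : ℝ} {ut : ℝ → ℂ}
    (hρ : 1 ≤ ρ) (hμ : μ ≤ 1) (hω : 0 < ω) (hδ : 0 < δ) (hωδ : ω * δ ^ ρ = 1) (hm : 0 < m)
    (hc : p₁ + δ ≤ c) (hcd : c ≤ d) (hsub : Icc c d ⊆ Ioo a b)
    (hψt : ∀ p ∈ Icc c d, m ≤ |ψt p|) (hfar : d ≤ p₀ - δ ∨ p₀ + δ ≤ c)
    (hutc : ContinuousOn ut (Icc c d)) (hutd : ∀ p ∈ Ioo c d, DifferentiableAt ℝ ut p)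
    (hutint : IntervalIntegrable (deriv ut) volume c d) (hM : ∀ p ∈ Icc c d, ‖ut p‖ ≤ M) :
    ‖∫ p in c..d, ((p - p₁) ^ (μ - 1) : ℝ) * ut p * Complex.exp (Complex.I * ω * ψ p)‖ ≤
      2 * δ ^ μ / m * (M + ∫ p in c..d, ‖deriv ut p‖) := by
  have hB : ∀ x ∈ Icc c d, ‖∫ p in c..x, Complex.exp (Complex.I * ω * ψ p)‖ ≤ 2 * δ / m :=
    fun x hx => hP.norm_integral_cexp_le hρ hω hδ hωδ hm hx.1
      ((Icc_subset_Icc_right hx.2).trans hsub) (fun p hp => hψt p ⟨hp.1, hp.2.trans hx.2⟩)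
      (hfar.imp_left hx.2.trans)
  calc _ ≤ 2 * δ / m * (δ ^ (μ - 1) * (M + ∫ p in c..d, ‖deriv ut p‖)) :=
        norm_integral_rpow_mul_le hμ hδ hc hcd
          (continuousOn_cexp_I_mul_ofReal_mul (hP.contDiffOn_one.continuousOn.mono hsub))
          hB hutc hutd hutint hM
    _ = 2 * δ ^ μ / m * (M + ∫ p in c..d, ‖deriv ut p‖) := by
      rw [Real.rpow_sub_one hδ.ne']
      field_simp

theorem norm_integral_le_of_add_le (hP : PhaseAssumption ψ ψt a b p₀ ρ)
    {μ p₁ c d ω δ m M : ℝ} {ut : ℝ → ℂ}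
    (hρ : 1 ≤ ρ) (hμ : μ ∈ Ioc 0 1) (hω : 0 < ω) (hδ : 0 < δ) (hωδ : ω * δ ^ ρ = 1) (hm : 0 < m)
    (hc : p₁ + δ ≤ c) (hcd : c ≤ d) (hsub : Icc c d ⊆ Ioo a b) (hψt : ∀ p ∈ Icc c d, m ≤ |ψt p|)
    (hutc : ContinuousOn ut (Icc c d)) (hutd : ∀ p ∈ Ioo c d, DifferentiableAt ℝ ut p)
    (hutint : IntervalIntegrable (deriv ut) volume c d) (hM : ∀ p ∈ Icc c d, ‖ut p‖ ≤ M) :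
    ‖∫ p in c..d, ((p - p₁) ^ (μ - 1) : ℝ) * ut p * Complex.exp (Complex.I * ω * ψ p)‖ ≤
      2 * M * δ ^ μ + 2 * δ ^ μ / m * (2 * M + ∫ p in c..d, ‖deriv ut p‖) := by
  set f : ℝ → ℂ := fun p => ((p - p₁) ^ (μ - 1) : ℝ) * ut p * Complex.exp (Complex.I * ω * ψ p)
  have hM0 : 0 ≤ M := (norm_nonneg _).trans (hM c (left_mem_Icc.2 hcd))
  have hsubI : ∀ {x y}, c ≤ x → y ≤ d → Icc x y ⊆ Icc c d := Icc_subset_Icc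
  have far : ∀ x y, c ≤ x → x ≤ y → y ≤ d → (x < y → y ≤ p₀ - δ ∨ p₀ + δ ≤ x) →
      ‖∫ p in x..y, f p‖ ≤ 2 * δ ^ μ / m * (M + ∫ p in x..y, ‖deriv ut p‖) := by
    intro x y hx hxy hy hside
    rcases hxy.eq_or_lt with rfl | hlt
    · simp only [integral_same, norm_zero, add_zero]
      exact mul_nonneg (by positivity) hM0
    exact hP.norm_integral_rpow_mul_cexp_le hρ hμ.2 hω hδ hωδ hm (hc.trans hx) hxy
      ((hsubI hx hy).trans hsub) (fun p hp => hψt p (hsubI hx hy hp)) (hside hlt)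
      (hutc.mono (hsubI hx hy)) (fun p hp => hutd p ⟨hx.trans_lt hp.1, hp.2.trans_le hy⟩)
      (hutint.mono_set (by rw [uIcc_of_le hxy, uIcc_of_le hcd]; exact hsubI hx hy))
      (fun p hp => hM p (hsubI hx hy hp))
  -- `[m₁, m₂]` is the part of `[c, d]` within `δ` of `p₀`
  set m₁ := max c (min d (p₀ - δ))
  set m₂ := max c (min d (p₀ + δ))
  have hm₁ : c ≤ m₁ := le_max_left _ _
  have hm₁₂ : m₁ ≤ m₂ := max_le_max le_rfl (min_le_min le_rfl (by linarith))
  have hm₂ : m₂ ≤ d := max_le hcd (min_le_left _ _)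
  have b₁ := far c m₁ le_rfl hm₁ (hm₁₂.trans hm₂) fun h => Or.inl (max_min_le_of_lt_max_min h)
  have b₂ : ‖∫ p in m₁..m₂, f p‖ ≤ 2 * M * δ ^ μ :=
    norm_integral_le_of_norm_le_rpow_of_add_le hμ.2 hδ (hc.trans hm₁) hm₁₂
      (by linarith [max_min_sub_max_min_le (q := c) (p := d) (by linarith : p₀ - δ ≤ p₀ + δ)])
      hM0 fun p hp =>
        norm_rpow_mul_mul_cexp_le (by linarith [hp.1]) (hM p ⟨hm₁.trans hp.1.le, hp.2.trans hm₂⟩)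
  have b₃ := far m₂ d (hm₁.trans hm₁₂) hm₂ le_rfl fun h => Or.inr (le_max_min_of_max_min_lt h)
  have hfi : IntervalIntegrable f volume c d :=
    (intervalIntegrable_rpow_mul hμ.1 (by linarith) hcd hutc).mul_continuousOn (uIcc_of_le hcd ▸
      continuousOn_cexp_I_mul_ofReal_mul (hP.contDiffOn_one.continuousOn.mono hsub))
  have hfar_sum : 2 * δ ^ μ / m * (M + ∫ p in c..m₁, ‖deriv ut p‖) +
      2 * δ ^ μ / m * (M + ∫ p in m₂..d, ‖deriv ut p‖) ≤
      2 * δ ^ μ / m * (2 * M + ∫ p in c..d, ‖deriv ut p‖) := by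
    have := integral_nonneg (μ := volume) hm₁₂ fun p _ => norm_nonneg (deriv ut p)
    rw [integral_add_adjacent_intervals₃ hm₁ hm₁₂ hm₂ hutint.norm, ← mul_add]
    exact mul_le_mul_of_nonneg_left (by linarith) (by positivity)
  rw [integral_add_adjacent_intervals₃ hm₁ hm₁₂ hm₂ hfi]
  calc _ ≤ ‖∫ p in c..m₁, f p‖ + ‖∫ p in m₁..m₂, f p‖ + ‖∫ p in m₂..d, f p‖ := norm_add₃_le
    _ ≤ _ := by linarith

theorem norm_integral_le_near_add_far (hP : PhaseAssumption ψ ψt a b p₀ ρ)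
    {μ p₁ p₂ ω δ m M : ℝ} {ut : ℝ → ℂ}
    (hρ : 1 ≤ ρ) (hμ : μ ∈ Ioc 0 1) (hω : 0 < ω) (hδ : 0 < δ) (hωδ : ω * δ ^ ρ = 1) (hm : 0 < m)
    (hI : Icc p₁ p₂ ⊆ Ioo a b) (hp : p₁ ≤ p₂) (hψt : ∀ p ∈ Icc p₁ p₂, m ≤ |ψt p|)
    (hutc : ContinuousOn ut (Icc p₁ p₂)) (hutd : ∀ p ∈ Ioo p₁ p₂, DifferentiableAt ℝ ut p)
    (hutint : IntervalIntegrable (deriv ut) volume p₁ p₂) (hM : ∀ p ∈ Icc p₁ p₂, ‖ut p‖ ≤ M) :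
    ‖∫ p in p₁..p₂, ((p - p₁) ^ (μ - 1) : ℝ) * ut p * Complex.exp (Complex.I * ω * ψ p)‖ ≤
      M * δ ^ μ / μ + (2 * M * δ ^ μ + 2 * δ ^ μ / m * (2 * M + ∫ p in p₁..p₂, ‖deriv ut p‖)) := by
  set f : ℝ → ℂ := fun p => ((p - p₁) ^ (μ - 1) : ℝ) * ut p * Complex.exp (Complex.I * ω * ψ p)
  have hM0 : 0 ≤ M := (norm_nonneg _).trans (hM p₁ (left_mem_Icc.2 hp))
  have hnear : ∀ e, p₁ ≤ e → e ≤ p₂ → ‖∫ p in p₁..e, f p‖ ≤ M * (e - p₁) ^ μ / μ :=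
    fun e he he₂ => norm_integral_le_of_norm_le_rpow hμ.1 he fun p hp =>
      norm_rpow_mul_mul_cexp_le hp.1.le (hM p ⟨hp.1.le, hp.2.trans he₂⟩)
  by_cases hq : p₂ ≤ p₁ + δ
  · have hrest : 0 ≤ 2 * M * δ ^ μ + 2 * δ ^ μ / m * (2 * M + ∫ p in p₁..p₂, ‖deriv ut p‖) :=
      add_nonneg (by positivity) (mul_nonneg (by positivity)
        (add_nonneg (by positivity) (integral_nonneg hp fun _ _ => norm_nonneg _)))
    calc _ ≤ M * (p₂ - p₁) ^ μ / μ := hnear p₂ hp le_rfl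
      _ ≤ M * δ ^ μ / μ := by gcongr <;> linarith [hμ.1]
      _ ≤ _ := le_add_of_nonneg_right hrest
  push Not at hq
  have hsub : Icc (p₁ + δ) p₂ ⊆ Icc p₁ p₂ := Icc_subset_Icc (by linarith) le_rfl
  have hqI : p₁ + δ ∈ uIcc p₁ p₂ := by rw [uIcc_of_le hp]; exact ⟨by linarith, hq.le⟩
  have hfi : IntervalIntegrable f volume p₁ p₂ :=
    (intervalIntegrable_rpow_mul hμ.1 le_rfl hp hutc).mul_continuousOn (uIcc_of_le hp ▸
      continuousOn_cexp_I_mul_ofReal_mul (hP.contDiffOn_one.continuousOn.mono hI))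
  have b₁ : ‖∫ p in p₁..p₁ + δ, f p‖ ≤ M * δ ^ μ / μ := by
    simpa using hnear (p₁ + δ) (by linarith) hq.le
  have b₂ := hP.norm_integral_le_of_add_le hρ hμ hω hδ hωδ hm le_rfl hq.le (hsub.trans hI)
    (fun p hp => hψt p (hsub hp)) (hutc.mono hsub) (fun p hp => hutd p ⟨by linarith [hp.1], hp.2⟩)
    (hutint.mono_set (uIcc_subset_uIcc hqI right_mem_uIcc)) (fun p hp => hM p (hsub hp))
  have hN : ∫ p in p₁ + δ..p₂, ‖deriv ut p‖ ≤ ∫ p in p₁..p₂, ‖deriv ut p‖ :=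
    integral_mono_interval (by linarith) hq.le le_rfl (ae_of_all _ fun _ => norm_nonneg _)
      hutint.norm
  rw [← integral_add_adjacent_intervals (hfi.mono_set (uIcc_subset_uIcc left_mem_uIcc hqI))
    (hfi.mono_set (uIcc_subset_uIcc hqI right_mem_uIcc))]
  refine (norm_add_le _ _).trans (add_le_add b₁ (b₂.trans ?_))
  gcongr

theorem norm_integral_le (hP : PhaseAssumption ψ ψt a b p₀ ρ)
    {μ p₁ p₂ ω δ m M : ℝ} {ut : ℝ → ℂ}
    (hρ : 1 ≤ ρ) (hμ : μ ∈ Ioc 0 1) (hω : 0 < ω) (hδ : 0 < δ) (hωδ : ω * δ ^ ρ = 1) (hm : 0 < m)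
    (hI : Icc p₁ p₂ ⊆ Ioo a b) (hp : p₁ ≤ p₂) (hψt : ∀ p ∈ Icc p₁ p₂, m ≤ |ψt p|)
    (hutc : ContinuousOn ut (Icc p₁ p₂)) (hutd : ∀ p ∈ Ioo p₁ p₂, DifferentiableAt ℝ ut p)
    (hutint : IntervalIntegrable (deriv ut) volume p₁ p₂) (hM : ∀ p ∈ Icc p₁ p₂, ‖ut p‖ ≤ M) :
    ‖∫ p in p₁..p₂, ((p - p₁) ^ (μ - 1) : ℝ) * ut p * Complex.exp (Complex.I * ω * ψ p)‖ ≤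
      ((3 / μ) * M + (8 * M + 2 * ∫ p in p₁..p₂, ‖deriv ut p‖) * m⁻¹) * δ ^ μ := by
  refine (hP.norm_integral_le_near_add_far hρ hμ hω hδ hωδ hm hI hp hψt hutc hutd hutint
    hM).trans ?_
  set N := ∫ p in p₁..p₂, ‖deriv ut p‖
  have hM0 : 0 ≤ M := (norm_nonneg _).trans (hM p₁ (left_mem_Icc.2 hp))
  have hμM : 2 * M * δ ^ μ ≤ 2 * M * δ ^ μ / μ := le_div_self (by positivity) hμ.1 hμ.2
  have hMm : 2 * δ ^ μ / m * (2 * M + N) ≤ (8 * M + 2 * N) * m⁻¹ * δ ^ μ :=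
    calc _ = δ ^ μ * m⁻¹ * (4 * M + 2 * N) := by ring
      _ ≤ δ ^ μ * m⁻¹ * (8 * M + 2 * N) := by gcongr; linarith
      _ = _ := by ring
  have hsum : ((3 / μ) * M + (8 * M + 2 * N) * m⁻¹) * δ ^ μ =
      M * δ ^ μ / μ + 2 * M * δ ^ μ / μ + (8 * M + 2 * N) * m⁻¹ * δ ^ μ := by ring
  linarith

end PhaseAssumption

theorem stmt_7_general (ρ μ a b p₁ p₂ p₀ : ℝ) (hρ : 1 < ρ) (hμ : μ ∈ Set.Ioc (0:ℝ) 1)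
    (hI : Set.Icc p₁ p₂ ⊆ Set.Ioo a b) (hp : p₁ < p₂)
    (ψ ψt : ℝ → ℝ)
    (hψ1 : ContDiffOn ℝ 1 ψ (Set.Ioo a b))
    (hψ2 : ContDiffOn ℝ 2 ψ (Set.Ioo a b \ {p₀}))
    (hfact : ∀ p ∈ Set.Ioo a b, deriv ψ p = |p - p₀| ^ (ρ - 1) * ψt p)
    (hψtc : ContinuousOn (fun p => |ψt p|) (Set.Ioo a b))
    (hψt0 : ∀ p ∈ Set.Ioo a b, ψt p ≠ 0)
    (hmono₁ : MonotoneOn (deriv ψ) {p ∈ Set.Ioo a b | p < p₀} ∨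
      AntitoneOn (deriv ψ) {p ∈ Set.Ioo a b | p < p₀})
    (hmono₂ : MonotoneOn (deriv ψ) {p ∈ Set.Ioo a b | p₀ < p} ∨
      AntitoneOn (deriv ψ) {p ∈ Set.Ioo a b | p₀ < p})
    (U ut : ℝ → ℂ)
    (hU : ∀ p ∈ Set.Ioc p₁ p₂, U p = ((p - p₁) ^ (μ - 1) : ℝ) * ut p)
    (hutc : ContinuousOn ut (Set.Icc p₁ p₂))
    (hutd : ∀ p ∈ Set.Ioo p₁ p₂, DifferentiableAt ℝ ut p)
    (hutint : IntervalIntegrable (deriv ut) volume p₁ p₂) :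
    ∀ ω : ℝ, 0 < ω →
      ‖∫ p in p₁..p₂, U p * Complex.exp (Complex.I * ω * ψ p)‖ ≤
        ((3 / μ) * (⨆ p : Set.Icc p₁ p₂, ‖ut p‖) +
          (8 * (⨆ p : Set.Icc p₁ p₂, ‖ut p‖) +
            2 * ∫ p in p₁..p₂, ‖deriv ut p‖) *
          (⨅ p : Set.Icc p₁ p₂, |ψt p|)⁻¹) * ω ^ (-(μ / ρ)) := by
  intro ω hω
  set δ := ω ^ (-(1 / ρ)) with hδ
  have hδ0 : 0 < δ := Real.rpow_pos_of_pos hω _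
  have hωδ : ω * δ ^ ρ = 1 := by
    rw [hδ, ← Real.rpow_mul hω.le, neg_mul, one_div, inv_mul_cancel₀ (by linarith),
      Real.rpow_neg_one, mul_inv_cancel₀ hω.ne']
  have hδμ : δ ^ μ = ω ^ (-(μ / ρ)) := by
    rw [hδ, ← Real.rpow_mul hω.le]
    ring_nf
  have hm0 : 0 < ⨅ p : Icc p₁ p₂, |ψt p| :=
    iInf_pos_of_continuousOn isCompact_Icc (nonempty_Icc.2 hp.le) (hψtc.mono hI)
      fun p hp => abs_pos.2 (hψt0 p (hI hp))
  have hUW : ∫ p in p₁..p₂, U p * Complex.exp (Complex.I * ω * ψ p) =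
      ∫ p in p₁..p₂, ((p - p₁) ^ (μ - 1) : ℝ) * ut p * Complex.exp (Complex.I * ω * ψ p) :=
    integral_congr_ae (ae_of_all _ fun p hp' => by rw [hU p (uIoc_of_le hp.le ▸ hp')])
  rw [hUW, ← hδμ]
  exact PhaseAssumption.norm_integral_le ⟨hψ1, hψ2, hfact, hmono₁, hmono₂⟩ hρ.le hμ hω hδ0 hωδ
    hm0 hI hp.le (fun p hp => iInf_le_of_nonneg (fun _ _ => abs_nonneg _) hp) hutc hutd hutint
    fun p hp => norm_le_iSup_of_continuousOn isCompact_Icc hutc hp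

/-- Extension of the van der Corput Lemma: phase with a stationary point `p₀`
of order `ρ - 1` (anywhere in the open interval `I = (a,b) ⊇ [p₁,p₂]`) and
amplitude with an integrable singular point of strength `μ - 1` at `p₁`. -/
theorem stmt_7 (ρ μ a b p₁ p₂ p₀ : ℝ) (hρ : 1 < ρ) (hμ : μ ∈ Set.Ioc (0:ℝ) 1)
    (hI : Set.Icc p₁ p₂ ⊆ Set.Ioo a b) (hp : p₁ < p₂) (hp₀ : p₀ ∈ Set.Ioo a b)
    (ψ ψt : ℝ → ℝ)
    (hψ1 : ContDiffOn ℝ 1 ψ (Set.Ioo a b))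
    (hψ2 : ContDiffOn ℝ 2 ψ (Set.Ioo a b \ {p₀}))
    (hfact : ∀ p ∈ Set.Ioo a b, deriv ψ p = |p - p₀| ^ (ρ - 1) * ψt p)
    (hψtc : ContinuousOn (fun p => |ψt p|) (Set.Ioo a b))
    (hψt0 : ∀ p ∈ Set.Ioo a b, ψt p ≠ 0)
    (hmono₁ : MonotoneOn (deriv ψ) {p ∈ Set.Ioo a b | p < p₀} ∨
      AntitoneOn (deriv ψ) {p ∈ Set.Ioo a b | p < p₀})
    (hmono₂ : MonotoneOn (deriv ψ) {p ∈ Set.Ioo a b | p₀ < p} ∨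
      AntitoneOn (deriv ψ) {p ∈ Set.Ioo a b | p₀ < p})
    (U ut : ℝ → ℂ)
    (hU : ∀ p ∈ Set.Ioc p₁ p₂, U p = ((p - p₁) ^ (μ - 1) : ℝ) * ut p)
    (hutc : ContinuousOn ut (Set.Icc p₁ p₂))
    (hutd : ∀ p ∈ Set.Ioo p₁ p₂, DifferentiableAt ℝ ut p)
    (hutint : IntervalIntegrable (deriv ut) volume p₁ p₂)
    (hut0 : μ ≠ 1 → ut p₁ ≠ 0) :
    ∀ ω : ℝ, 0 < ω →
      ‖∫ p in p₁..p₂, U p * Complex.exp (Complex.I * ω * ψ p)‖ ≤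
        ((3 / μ) * (⨆ p : Set.Icc p₁ p₂, ‖ut p‖) +
          (8 * (⨆ p : Set.Icc p₁ p₂, ‖ut p‖) +
            2 * ∫ p in p₁..p₂, ‖deriv ut p‖) *
          (⨅ p : Set.Icc p₁ p₂, |ψt p|)⁻¹) * ω ^ (-(μ / ρ)) :=
  stmt_7_general ρ μ a b p₁ p₂ p₀ hρ hμ hI hp ψ ψt hψ1 hψ2 hfact hψtc hψt0 hmono₁ hmono₂ U ut hU
    hutc hutd hutint
end

section
/- Let μ ∈ (0,1]. Suppose U : (p₁,p₂] → ℂ satisfies U(p) = (p−p₁)^{μ−1} ũ(p) with ũ continuous on [p₁,p₂], differentiable on (p₁,p₂), ũ' ∈ L¹(p₁,p₂), and ũ(p₁) ≠ 0 if μ ≠ 1. Suppose ψ ∈ C²([p₁,p₂]) is real-valued, ψ' does not vanish and is monotone on [p₁,p₂]. Then for all ω > 0, |∫_{p₁}^{p₂} U(p) e^{iωψ(p)} dp| ≤ C_c(U,ψ) ω^{−μ}, where C_c(U,ψ) = (1/μ)‖ũ‖_{L^∞(p₁,p₂)} + (4‖ũ‖_{L^∞(p₁,p₂)} + ‖ũ'‖_{L¹(p₁,p₂)})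 (min_{[p₁,p₂]}|ψ'|)^{−1}. -/
/-!
Split the integral at `p₁ + ω⁻¹`. On the first piece `|U p| ≤ ‖ũ‖_∞ (p - p₁) ^ (μ - 1)`, which
integrates to `‖ũ‖_∞ ω ^ (-μ) / μ`. On the second piece write `e^{iωψ} = (e^{iωψ})' / (iωψ')` and
integrate by parts. With `m = min |ψ'|`, the new amplitude `(p - p₁) ^ (μ - 1) ũ / ψ'` is bounded
there by `‖ũ‖_∞ ω ^ (1 - μ) / m`; since `(p - p₁) ^ (μ - 1)` is decreasing and `1 / ψ'` is
monotone of constant sign, the total variation of each factor is at most its supremum. The two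
boundary terms and the variation of the amplitude give `(4 ‖ũ‖_∞ + ‖ũ'‖₁) ω ^ (-μ) / m`.
-/

open MeasureTheory intervalIntegral Set

theorem integral_abs_deriv_of_monotoneOn {h h' : ℝ → ℝ} {a b : ℝ} (hab : a ≤ b)
    (hc : ContinuousOn h (Icc a b)) (hd : ∀ x ∈ Ioo a b, HasDerivAt h (h' x) x)
    (hm : MonotoneOn h (Icc a b)) :
    IntervalIntegrable h' volume a b ∧ ∫ x in a..b, |h' x| = h b - h a := by
  have h'_nonneg : ∀ x ∈ Ioo a b, 0 ≤ h' x := fun x hx => by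
    rw [← (hd x hx).deriv, ← derivWithin_of_mem_nhds (Icc_mem_nhds hx.1 hx.2)]
    exact hm.derivWithin_nonneg
  have hi : IntervalIntegrable h' volume a b :=
    intervalIntegrable_deriv_of_nonneg (uIcc_of_le hab ▸ hc) (by simpa [hab] using hd)
      (by simpa [hab] using h'_nonneg)
  refine ⟨hi, ?_⟩
  rw [integral_of_le hab, integral_Ioc_eq_integral_Ioo,
    setIntegral_congr_fun measurableSet_Ioo fun x hx => abs_of_nonneg (h'_nonneg x hx),
    ← integral_Ioc_eq_integral_Ioo, ← integral_of_le hab,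
    integral_eq_sub_of_hasDerivAt_of_le hab hc hd hi]

theorem integral_abs_deriv_of_antitoneOn {h h' : ℝ → ℝ} {a b : ℝ} (hab : a ≤ b)
    (hc : ContinuousOn h (Icc a b)) (hd : ∀ x ∈ Ioo a b, HasDerivAt h (h' x) x)
    (hm : AntitoneOn h (Icc a b)) :
    IntervalIntegrable h' volume a b ∧ ∫ x in a..b, |h' x| = h a - h b := by
  obtain ⟨hi, hI⟩ :=
    integral_abs_deriv_of_monotoneOn hab hc.neg (fun x hx => (hd x hx).neg) hm.neg
  simp only [abs_neg, Pi.neg_apply] at hI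
  exact ⟨by simpa [Pi.neg_def] using hi.neg, by linarith⟩

theorem IsPreconnected.pos_or_neg_of_ne_zero {f : ℝ → ℝ} {s : Set ℝ} (hs : IsPreconnected s)
    (hf : ContinuousOn f s) (h0 : ∀ x ∈ s, f x ≠ 0) :
    (∀ x ∈ s, 0 < f x) ∨ ∀ x ∈ s, f x < 0 := by
  by_contra! ⟨⟨x, hx, hx0⟩, ⟨y, hy, hy0⟩⟩
  obtain ⟨z, hz, hz0⟩ := hs.intermediate_value hx hy hf ⟨hx0, hy0⟩
  exact h0 z hz hz0

theorem ContDiffOn.continuousOn_deriv_Icc {F : Type*} [NormedAddCommGroup F] [NormedSpace ℝ F]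
    {f : ℝ → F} {a b : ℝ} (hab : a < b) (hf : ContDiffOn ℝ 1 f (Icc a b))
    (hd : ∀ x ∈ Icc a b, DifferentiableAt ℝ f x) : ContinuousOn (deriv f) (Icc a b) :=
  (hf.continuousOn_derivWithin (uniqueDiffOn_Icc hab) le_rfl).congr fun x hx =>
    ((hd x hx).derivWithin (uniqueDiffOn_Icc hab x hx)).symm

theorem IsCompact.le_ciSup_of_continuousOn {α : Type*} [TopologicalSpace α] {s : Set α}
    {f : α → ℝ} (hs : IsCompact s) (hf : ContinuousOn f s) {x : α} (hx : x ∈ s) :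
    f x ≤ ⨆ p : s, f p :=
  le_ciSup (by simpa [image_eq_range] using hs.bddAbove_image hf) (⟨x, hx⟩ : s)

theorem IsCompact.lt_ciInf_of_continuousOn {α : Type*} [TopologicalSpace α] {s : Set α}
    {f : α → ℝ} {c : ℝ} (hs : IsCompact s) (hne : s.Nonempty) (hf : ContinuousOn f s)
    (hc : ∀ x ∈ s, c < f x) : c < ⨅ p : s, f p := by
  obtain ⟨x₀, hx₀, hmin⟩ := hs.exists_isMinOn hne hf
  have : Nonempty s := hne.to_subtype
  exact (hc x₀ hx₀).trans_le (le_ciInf fun p => hmin p.2)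

theorem integral_abs_deriv_inv_le {φ : ℝ → ℝ} {a b m : ℝ} (hab : a ≤ b)
    (hφc : ContinuousOn φ (Icc a b)) (hφd : ∀ x ∈ Ioo a b, DifferentiableAt ℝ φ x)
    (hmono : MonotoneOn φ (Icc a b) ∨ AntitoneOn φ (Icc a b)) (hm0 : 0 < m)
    (hm : ∀ x ∈ Icc a b, m ≤ |φ x|) :
    IntervalIntegrable (deriv fun x => (φ x)⁻¹) volume a b ∧
      ∫ x in a..b, |deriv (fun x => (φ x)⁻¹) x| ≤ m⁻¹ := by
  have hφ0 : ∀ x ∈ Icc a b, φ x ≠ 0 := fun x hx => abs_pos.1 (hm0.trans_le (hm x hx))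
  set w : ℝ → ℝ := fun x => (φ x)⁻¹
  have hwc : ContinuousOn w (Icc a b) := hφc.inv₀ hφ0
  have hwd : ∀ x ∈ Ioo a b, HasDerivAt w (deriv w x) x := fun x hx =>
    ((hφd x hx).inv (hφ0 x (Ioo_subset_Icc_self hx))).hasDerivAt
  have hwB : ∀ x ∈ Icc a b, |w x| ≤ m⁻¹ := fun x hx => by
    rw [abs_inv]
    exact inv_anti₀ hm0 (hm x hx)
  have hsign := isPreconnected_Icc.pos_or_neg_of_ne_zero hφc hφ0
  -- `φ` has constant sign, so `w` reverses the order of `φ` and `w a`, `w b` have the same sign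
  have hw_anti : ∀ x ∈ Icc a b, ∀ y ∈ Icc a b, φ x ≤ φ y → w y ≤ w x := by
    intro x hx y hy hxy
    rcases hsign with hs | hs
    · exact inv_anti₀ (hs x hx) hxy
    · exact (inv_le_inv_of_neg (hs y hy) (hs x hx)).2 hxy
  have hdiff : |w b - w a| ≤ m⁻¹ := by
    have ha := abs_le.1 (hwB a ⟨le_rfl, hab⟩)
    have hb := abs_le.1 (hwB b ⟨hab, le_rfl⟩)
    rcases hsign with hs | hs
    · have := inv_pos.2 (hs a ⟨le_rfl, hab⟩)
      have := inv_pos.2 (hs b ⟨hab, le_rfl⟩)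
      rw [abs_le]; constructor <;> linarith
    · have := inv_lt_zero.2 (hs a ⟨le_rfl, hab⟩)
      have := inv_lt_zero.2 (hs b ⟨hab, le_rfl⟩)
      rw [abs_le]; constructor <;> linarith
  rcases hmono with hφm | hφm
  · obtain ⟨hi, hI⟩ := integral_abs_deriv_of_antitoneOn hab hwc hwd
      fun x hx y hy hxy => hw_anti x hx y hy (hφm hx hy hxy)
    rw [abs_sub_comm] at hdiff
    exact ⟨hi, hI.trans_le ((le_abs_self _).trans hdiff)⟩
  · obtain ⟨hi, hI⟩ := integral_abs_deriv_of_monotoneOn hab hwc hwd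
      fun x hx y hy hxy => hw_anti y hy x hx (hφm hx hy hxy)
    exact ⟨hi, hI.trans_le ((le_abs_self _).trans hdiff)⟩

theorem integral_norm_deriv_mul_add_mul_deriv_le {A : Type*} [NormedRing A]
    {f f' g g' : ℝ → A} {a b Bf Bg : ℝ} (hab : a ≤ b)
    (hf : ContinuousOn f (Icc a b)) (hg : ContinuousOn g (Icc a b))
    (hf' : IntervalIntegrable f' volume a b) (hg' : IntervalIntegrable g' volume a b)
    (hfB : ∀ x ∈ Icc a b, ‖f x‖ ≤ Bf) (hgB : ∀ x ∈ Icc a b, ‖g x‖ ≤ Bg) :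
    IntervalIntegrable (fun x => f' x * g x + f x * g' x) volume a b ∧
      ∫ x in a..b, ‖f' x * g x + f x * g' x‖ ≤
        Bg * (∫ x in a..b, ‖f' x‖) + Bf * ∫ x in a..b, ‖g' x‖ := by
  rw [← uIcc_of_le hab] at hf hg
  have hi := (hf'.mul_continuousOn hg).add (hg'.continuousOn_mul hf)
  refine ⟨hi, ?_⟩
  rw [← intervalIntegral.integral_const_mul, ← intervalIntegral.integral_const_mul,
    ← integral_add (hf'.norm.const_mul _) (hg'.norm.const_mul _)]
  refine integral_mono_on hab hi.norm ((hf'.norm.const_mul _).add (hg'.norm.const_mul _))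
    fun x hx => ?_
  rw [← uIcc_of_le hab] at hx
  calc ‖f' x * g x + f x * g' x‖ ≤ ‖f' x‖ * ‖g x‖ + ‖f x‖ * ‖g' x‖ :=
        (norm_add_le _ _).trans (add_le_add (norm_mul_le _ _) (norm_mul_le _ _))
    _ ≤ Bg * ‖f' x‖ + Bf * ‖g' x‖ := by
        rw [mul_comm Bg]
        gcongr
        exacts [hgB x (uIcc_of_le hab ▸ hx), hfB x (uIcc_of_le hab ▸ hx)]

theorem exists_hasDerivAt_rpow_div_integral_abs_le {μ a c b m : ℝ} (hμ : μ ≤ 1) (hac : a < c)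
    (hcb : c ≤ b) (hm0 : 0 < m) {φ : ℝ → ℝ} (hφc : ContinuousOn φ (Icc c b))
    (hφd : ∀ x ∈ Ioo c b, DifferentiableAt ℝ φ x)
    (hmono : MonotoneOn φ (Icc c b) ∨ AntitoneOn φ (Icc c b))
    (hm : ∀ x ∈ Icc c b, m ≤ |φ x|) :
    ∃ ρ' : ℝ → ℝ, (∀ x ∈ Ioo c b, HasDerivAt (fun x => (x - a) ^ (μ - 1) / φ x) (ρ' x) x) ∧
      IntervalIntegrable ρ' volume c b ∧
      ∫ x in c..b, |ρ' x| ≤ 2 * ((c - a) ^ (μ - 1) / m) := by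
  have hφ0 : ∀ x ∈ Icc c b, φ x ≠ 0 := fun x hx => abs_pos.1 (hm0.trans_le (hm x hx))
  set v : ℝ → ℝ := fun x => (x - a) ^ (μ - 1)
  have hvd : ∀ x ∈ Icc c b, HasDerivAt v (deriv v x) x := fun x hx =>
    ((differentiableAt_id.sub_const a).rpow_const
      (Or.inl (sub_pos.2 (hac.trans_le hx.1)).ne')).hasDerivAt
  have hvc : ContinuousOn v (Icc c b) := fun x hx =>
    (hvd x hx).continuousAt.continuousWithinAt
  have hv_anti : AntitoneOn v (Icc c b) := fun x hx y hy hxy =>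
    Real.rpow_le_rpow_of_nonpos (sub_pos.2 (hac.trans_le hx.1)) (by linarith) (by linarith)
  have hvB : ∀ x ∈ Icc c b, ‖v x‖ ≤ v c := fun x hx => by
    rw [Real.norm_of_nonneg (Real.rpow_nonneg (by linarith [hac.trans_le hx.1]) _)]
    exact hv_anti ⟨le_rfl, hcb⟩ hx hx.1
  have hwB : ∀ x ∈ Icc c b, ‖(φ x)⁻¹‖ ≤ m⁻¹ := fun x hx => by
    rw [norm_inv, Real.norm_eq_abs]
    exact inv_anti₀ hm0 (hm x hx)
  obtain ⟨hv'i, hv'I⟩ := integral_abs_deriv_of_antitoneOn hcb hvc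
    (fun x hx => hvd x (Ioo_subset_Icc_self hx)) hv_anti
  obtain ⟨hw'i, hw'I⟩ := integral_abs_deriv_inv_le hcb hφc hφd hmono hm0 hm
  obtain ⟨hi, hI⟩ := integral_norm_deriv_mul_add_mul_deriv_le (g := fun x => (φ x)⁻¹) hcb
    hvc (hφc.inv₀ hφ0) hv'i hw'i hvB hwB
  refine ⟨_, fun x hx => ?_, hi, ?_⟩
  · have hx' := Ioo_subset_Icc_self hx
    simp only [div_eq_mul_inv]
    exact (hvd x hx').fun_mul ((hφd x hx).inv (hφ0 x hx')).hasDerivAt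
  · simp only [Real.norm_eq_abs] at hI
    have hvc0 : 0 ≤ v c := (norm_nonneg _).trans (hvB c ⟨le_rfl, hcb⟩)
    have hvb : 0 ≤ v b := Real.rpow_nonneg (by linarith) _
    calc _ ≤ m⁻¹ * (v c - v b) + v c * m⁻¹ := by
          rw [← hv'I]
          exact hI.trans (by gcongr)
      _ ≤ m⁻¹ * v c + v c * m⁻¹ := by gcongr; linarith
      _ = 2 * (v c / m) := by ring

theorem norm_integral_mul_deriv_mul_cexp_le {a b ω : ℝ} (hab : a ≤ b) (hω : 0 < ω)
    {ψ φ : ℝ → ℝ} {u u' : ℝ → ℂ} (hψ : ∀ x ∈ Icc a b, HasDerivAt ψ (φ x) x)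
    (hφ : ContinuousOn φ (Icc a b)) (hu : ContinuousOn u (Icc a b))
    (hu' : ∀ x ∈ Ioo a b, HasDerivAt u (u' x) x) (hu'i : IntervalIntegrable u' volume a b) :
    ‖∫ x in a..b, u x * φ x * Complex.exp (Complex.I * ω * ψ x)‖ ≤
      (‖u a‖ + ‖u b‖ + ∫ x in a..b, ‖u' x‖) / ω := by
  set E : ℝ → ℂ := fun x => Complex.exp (Complex.I * ω * ψ x)
  have hE : ∀ x ∈ Icc a b, HasDerivAt E (E x * (Complex.I * ω * φ x)) x := fun x hx =>
    ((hψ x hx).ofReal_comp.const_mul (Complex.I * ω)).cexp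
  have hEc : ContinuousOn E (Icc a b) := fun x hx =>
    (hE x hx).continuousAt.continuousWithinAt
  have hEn : ∀ x, ‖E x‖ = 1 := fun x => by
    simp [E, Complex.norm_exp]
  have hω' : (ω : ℂ) ≠ 0 := by exact_mod_cast hω.ne'
  have hE'i : IntervalIntegrable (fun x => E x * (Complex.I * ω * φ x)) volume a b :=
    (hEc.mul (continuousOn_const.mul (Complex.continuous_ofReal.comp_continuousOn hφ)))
      |>.intervalIntegrable_of_Icc hab
  have hibp := integral_mul_deriv_eq_deriv_mul_of_hasDeriv_right (uIcc_of_le hab ▸ hu)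
    (uIcc_of_le hab ▸ hEc) (fun x hx => (hu' x (by simpa [hab] using hx)).hasDerivWithinAt)
    (fun x hx => (hE x (Ioo_subset_Icc_self (by simpa [hab] using hx))).hasDerivWithinAt)
    hu'i hE'i
  have hrest : ‖∫ x in a..b, u' x * E x‖ ≤ ∫ x in a..b, ‖u' x‖ := by
    simpa [hEn] using norm_integral_le_integral_norm (f := fun x => u' x * E x) hab
  have hdiv : ∫ x in a..b, u x * φ x * E x =
      (Complex.I * ω)⁻¹ * ∫ x in a..b, u x * (E x * (Complex.I * ω * φ x)) := by
    rw [← intervalIntegral.integral_const_mul]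
    congr 1 with x
    field_simp
  rw [hdiv, hibp, norm_mul, norm_inv, norm_mul, Complex.norm_I, Complex.norm_real,
    Real.norm_of_nonneg hω.le, one_mul, inv_mul_eq_div]
  gcongr
  calc ‖u b * E b - u a * E a - ∫ x in a..b, u' x * E x‖
      ≤ ‖u b * E b‖ + ‖u a * E a‖ + ‖∫ x in a..b, u' x * E x‖ :=
        (norm_sub_le _ _).trans (add_le_add_left (norm_sub_le _ _) _)
    _ ≤ ‖u a‖ + ‖u b‖ + ∫ x in a..b, ‖u' x‖ := by
        rw [norm_mul, norm_mul, hEn, hEn]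
        linarith

theorem norm_integral_rpow_mul_le_s10 {a x μ M : ℝ} (hμ : 0 < μ) (hax : a ≤ x) {g : ℝ → ℂ}
    (hg : ContinuousOn g (Icc a x)) (hM : ∀ p ∈ Icc a x, ‖g p‖ ≤ M) :
    IntervalIntegrable (fun p => (((p - a) ^ (μ - 1) : ℝ) : ℂ) * g p) volume a x ∧
      ‖∫ p in a..x, (((p - a) ^ (μ - 1) : ℝ) : ℂ) * g p‖ ≤ M * ((x - a) ^ μ / μ) := by
  have hvi : IntervalIntegrable (fun p => M * (p - a) ^ (μ - 1)) volume a x := by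
    refine IntervalIntegrable.const_mul ?_ M
    simpa using (intervalIntegrable_rpow' (a := 0) (b := x - a)
      (by linarith : -1 < μ - 1)).comp_sub_right a
  have hvI : ∫ p in a..x, M * (p - a) ^ (μ - 1) = M * ((x - a) ^ μ / μ) := by
    rw [intervalIntegral.integral_const_mul,
      intervalIntegral.integral_comp_sub_right (fun p => p ^ (μ - 1)),
      integral_rpow (Or.inl (by linarith)), sub_add_cancel, sub_self, Real.zero_rpow hμ.ne',
      sub_zero]
  have hbound : ∀ p ∈ Ioc a x,
      ‖(((p - a) ^ (μ - 1) : ℝ) : ℂ) * g p‖ ≤ M * (p - a) ^ (μ - 1) := by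
    intro p hp
    have hv : 0 ≤ (p - a) ^ (μ - 1) := Real.rpow_nonneg (by linarith [hp.1]) _
    rw [norm_mul, Complex.norm_real, Real.norm_of_nonneg hv, mul_comm M]
    exact mul_le_mul_of_nonneg_left (hM p (Ioc_subset_Icc_self hp)) hv
  have hcont : ContinuousOn (fun p => (((p - a) ^ (μ - 1) : ℝ) : ℂ) * g p) (Ioc a x) := by
    refine (Complex.continuous_ofReal.comp_continuousOn ?_).mul (hg.mono Ioc_subset_Icc_self)
    exact (continuousOn_id.sub continuousOn_const).rpow_const fun p hp =>
      Or.inl (sub_pos.2 hp.1).ne'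
  have hi : IntervalIntegrable (fun p => (((p - a) ^ (μ - 1) : ℝ) : ℂ) * g p) volume a x := by
    rw [intervalIntegrable_iff_integrableOn_Ioc_of_le hax]
    refine Integrable.mono' ((intervalIntegrable_iff_integrableOn_Ioc_of_le hax).1 hvi)
      (hcont.aestronglyMeasurable measurableSet_Ioc) ?_
    exact (ae_restrict_iff' measurableSet_Ioc).2 (Filter.Eventually.of_forall hbound)
  refine ⟨hi, ?_⟩
  rw [← hvI]
  exact norm_integral_le_of_norm_le hax (Filter.Eventually.of_forall hbound) hvi

theorem norm_integral_rpow_mul_cexp_le_of_lt {μ a c b ω M m : ℝ} (hμ : μ ≤ 1) (hac : a < c)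
    (hcb : c ≤ b) (hω : 0 < ω) (hm0 : 0 < m) {ψ φ : ℝ → ℝ} {g g' : ℝ → ℂ}
    (hψ : ∀ x ∈ Icc c b, HasDerivAt ψ (φ x) x) (hφc : ContinuousOn φ (Icc c b))
    (hφd : ∀ x ∈ Ioo c b, DifferentiableAt ℝ φ x)
    (hmono : MonotoneOn φ (Icc c b) ∨ AntitoneOn φ (Icc c b))
    (hm : ∀ x ∈ Icc c b, m ≤ |φ x|) (hgc : ContinuousOn g (Icc c b))
    (hgd : ∀ x ∈ Ioo c b, HasDerivAt g (g' x) x)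
    (hg'i : IntervalIntegrable g' volume c b) (hM : ∀ x ∈ Icc c b, ‖g x‖ ≤ M) :
    ‖∫ x in c..b, (((x - a) ^ (μ - 1) : ℝ) : ℂ) * g x * Complex.exp (Complex.I * ω * ψ x)‖ ≤
      (4 * M + ∫ x in c..b, ‖g' x‖) * ((c - a) ^ (μ - 1) / m) / ω := by
  have hφ0 : ∀ x ∈ Icc c b, φ x ≠ 0 := fun x hx => abs_pos.1 (hm0.trans_le (hm x hx))
  set B := (c - a) ^ (μ - 1) / m
  set ρ : ℝ → ℝ := fun x => (x - a) ^ (μ - 1) / φ x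
  obtain ⟨ρ', hρd, hρ'i, hρ'I⟩ :=
    exists_hasDerivAt_rpow_div_integral_abs_le hμ hac hcb hm0 hφc hφd hmono hm
  have hρc : ContinuousOn (fun x => (ρ x : ℂ)) (Icc c b) :=
    Complex.continuous_ofReal.comp_continuousOn <|
      ((continuousOn_id.sub continuousOn_const).rpow_const fun x hx =>
        Or.inl (sub_pos.2 (hac.trans_le hx.1)).ne').div hφc hφ0
  have hρB : ∀ x ∈ Icc c b, ‖(ρ x : ℂ)‖ ≤ B := fun x hx => by
    have hxa : 0 < x - a := by linarith [hx.1]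
    rw [Complex.norm_real, Real.norm_eq_abs, abs_div, abs_of_pos (Real.rpow_pos_of_pos hxa _)]
    exact div_le_div₀ (Real.rpow_nonneg (by linarith) _)
      (Real.rpow_le_rpow_of_nonpos (by linarith) (by linarith [hx.1]) (by linarith)) hm0
      (hm x hx)
  obtain ⟨hu'i, hu'I⟩ := integral_norm_deriv_mul_add_mul_deriv_le
    (f' := fun x => (ρ' x : ℂ)) hcb hρc hgc ⟨hρ'i.1.ofReal, hρ'i.2.ofReal⟩ hg'i hρB hM
  have hibp := norm_integral_mul_deriv_mul_cexp_le (u := fun x => (ρ x : ℂ) * g x)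
    (u' := fun x => (ρ' x : ℂ) * g x + (ρ x : ℂ) * g' x) hcb hω hψ hφc (hρc.mul hgc)
    (fun x hx => (hρd x hx).ofReal_comp.mul (hgd x hx)) hu'i
  have heq :
      ∫ x in c..b, (((x - a) ^ (μ - 1) : ℝ) : ℂ) * g x * Complex.exp (Complex.I * ω * ψ x) =
        ∫ x in c..b, (ρ x : ℂ) * g x * φ x * Complex.exp (Complex.I * ω * ψ x) := by
    refine integral_congr fun x hx => ?_
    have : (φ x : ℂ) ≠ 0 := by exact_mod_cast hφ0 x (uIcc_of_le hcb ▸ hx)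
    simp only [ρ]
    push_cast
    field_simp
  have hM0 : 0 ≤ M := (norm_nonneg _).trans (hM c ⟨le_rfl, hcb⟩)
  have hB0 : 0 ≤ B := (norm_nonneg _).trans (hρB c ⟨le_rfl, hcb⟩)
  have hend : ∀ x ∈ Icc c b, ‖(ρ x : ℂ) * g x‖ ≤ B * M := fun x hx =>
    (norm_mul_le _ _).trans (mul_le_mul (hρB x hx) (hM x hx) (norm_nonneg _) hB0)
  have hρ'I' : M * ∫ x in c..b, ‖(ρ' x : ℂ)‖ ≤ M * (2 * B) := by
    simp only [Complex.norm_real, Real.norm_eq_abs]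
    gcongr
  rw [heq]
  refine hibp.trans (div_le_div_of_nonneg_right ?_ hω.le)
  linarith [hend c ⟨le_rfl, hcb⟩, hend b ⟨hcb, le_rfl⟩]

theorem norm_integral_rpow_mul_cexp_le {μ a b ω M m : ℝ} (hμ : μ ∈ Ioc 0 1) (hab : a ≤ b)
    (hω : 0 < ω) (hm0 : 0 < m) {ψ φ : ℝ → ℝ} {g g' : ℝ → ℂ}
    (hψ : ∀ x ∈ Icc a b, HasDerivAt ψ (φ x) x) (hφc : ContinuousOn φ (Icc a b))
    (hφd : ∀ x ∈ Ioo a b, DifferentiableAt ℝ φ x)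
    (hmono : MonotoneOn φ (Icc a b) ∨ AntitoneOn φ (Icc a b))
    (hm : ∀ x ∈ Icc a b, m ≤ |φ x|) (hgc : ContinuousOn g (Icc a b))
    (hgd : ∀ x ∈ Ioo a b, HasDerivAt g (g' x) x)
    (hg'i : IntervalIntegrable g' volume a b) (hM : ∀ x ∈ Icc a b, ‖g x‖ ≤ M) :
    ‖∫ x in a..b, (((x - a) ^ (μ - 1) : ℝ) : ℂ) * g x * Complex.exp (Complex.I * ω * ψ x)‖ ≤
      ((1 / μ) * M + (4 * M + ∫ x in a..b, ‖g' x‖) * m⁻¹) * ω ^ (-μ) := by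
  obtain ⟨hμ0, hμ1⟩ := hμ
  set E : ℝ → ℂ := fun x => Complex.exp (Complex.I * ω * ψ x)
  have hgE : ContinuousOn (fun x => g x * E x) (Icc a b) := hgc.mul fun x hx =>
    ((hψ x hx).ofReal_comp.const_mul (Complex.I * ω)).cexp.continuousAt.continuousWithinAt
  have hgEM : ∀ x ∈ Icc a b, ‖g x * E x‖ ≤ M := fun x hx => by
    simpa [E, Complex.norm_exp] using hM x hx
  have hnear : ∀ x ∈ Icc a b,
      IntervalIntegrable (fun p => (((p - a) ^ (μ - 1) : ℝ) : ℂ) * g p * E p) volume a x ∧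
        ‖∫ p in a..x, (((p - a) ^ (μ - 1) : ℝ) : ℂ) * g p * E p‖ ≤ M * ((x - a) ^ μ / μ) :=
    fun x hx => by
      simpa only [mul_assoc] using norm_integral_rpow_mul_le_s10 hμ0 hx.1
        (hgE.mono (Icc_subset_Icc_right hx.2)) fun p hp => hgEM p ⟨hp.1, hp.2.trans hx.2⟩
  have hωμ : ω⁻¹ ^ μ = ω ^ (-μ) := by rw [Real.inv_rpow hω.le, Real.rpow_neg hω.le]
  rcases le_or_gt (b - a) ω⁻¹ with hshort | hlong
  · have hM0 : 0 ≤ M := (norm_nonneg _).trans (hM a ⟨le_rfl, hab⟩)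
    have hL0 : 0 ≤ ∫ x in a..b, ‖g' x‖ := integral_nonneg hab fun _ _ => norm_nonneg _
    have hfar_nonneg : 0 ≤ (4 * M + ∫ x in a..b, ‖g' x‖) * m⁻¹ * ω ^ (-μ) := by positivity
    calc _ ≤ M * ((b - a) ^ μ / μ) := (hnear b ⟨hab, le_rfl⟩).2
      _ ≤ M * (ω⁻¹ ^ μ / μ) := by gcongr
      _ = 1 / μ * M * ω ^ (-μ) := by rw [hωμ]; ring
      _ ≤ _ := by rw [add_mul]; linarith
  · set c := a + ω⁻¹
    have hac : a < c := by simp [c, hω]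
    have hcb : c ≤ b := by linarith
    have hsub : Icc c b ⊆ Icc a b := Icc_subset_Icc_left hac.le
    have hsubu : uIcc c b ⊆ uIcc a b := by
      rw [uIcc_of_le hcb, uIcc_of_le hab]
      exact hsub
    have hfar := norm_integral_rpow_mul_cexp_le_of_lt hμ1 hac hcb hω hm0
      (fun x hx => hψ x (hsub hx)) (hφc.mono hsub)
      (fun x hx => hφd x (Ioo_subset_Ioo_left hac.le hx)) (hmono.imp (·.mono hsub) (·.mono hsub))
      (fun x hx => hm x (hsub hx)) (hgc.mono hsub)
      (fun x hx => hgd x (Ioo_subset_Ioo_left hac.le hx)) (hg'i.mono_set hsubu)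
      (fun x hx => hM x (hsub hx))
    have hLc : ∫ x in c..b, ‖g' x‖ ≤ ∫ x in a..b, ‖g' x‖ :=
      integral_mono_interval hac.le hcb le_rfl
        (Filter.Eventually.of_forall fun _ => norm_nonneg _) hg'i.norm
    rw [← integral_add_adjacent_intervals (hnear c ⟨hac.le, hcb⟩).1
      ((hnear b ⟨hab, le_rfl⟩).1.mono_set hsubu)]
    calc _ ≤ ‖∫ p in a..c, (((p - a) ^ (μ - 1) : ℝ) : ℂ) * g p * E p‖
          + ‖∫ p in c..b, (((p - a) ^ (μ - 1) : ℝ) : ℂ) * g p * E p‖ := norm_add_le _ _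
      _ ≤ M * ((c - a) ^ μ / μ) +
            (4 * M + ∫ x in a..b, ‖g' x‖) * ((c - a) ^ (μ - 1) / m) / ω := by
          gcongr
          · exact (hnear c ⟨hac.le, hcb⟩).2
          · exact hfar.trans (by gcongr)
      _ = _ := by
          rw [show c - a = ω⁻¹ by ring, Real.rpow_sub_one (inv_ne_zero hω.ne'), hωμ]
          field_simp

theorem stmt_10_general (μ p₁ p₂ : ℝ) (hμ : μ ∈ Set.Ioc (0:ℝ) 1) (hp : p₁ < p₂)
    (ψ : ℝ → ℝ) (hψ : ContDiffOn ℝ 2 ψ (Set.Icc p₁ p₂))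
    (hψ'0 : ∀ p ∈ Set.Icc p₁ p₂, deriv ψ p ≠ 0)
    (hmono : MonotoneOn (deriv ψ) (Set.Icc p₁ p₂) ∨
      AntitoneOn (deriv ψ) (Set.Icc p₁ p₂))
    (U ut : ℝ → ℂ)
    (hU : ∀ p ∈ Set.Ioc p₁ p₂, U p = ((p - p₁) ^ (μ - 1) : ℝ) * ut p)
    (hutc : ContinuousOn ut (Set.Icc p₁ p₂))
    (hutd : ∀ p ∈ Set.Ioo p₁ p₂, DifferentiableAt ℝ ut p)
    (hutint : IntervalIntegrable (deriv ut) volume p₁ p₂) :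
    ∀ ω : ℝ, 0 < ω →
      ‖∫ p in p₁..p₂, U p * Complex.exp (Complex.I * ω * ψ p)‖ ≤
        ((1 / μ) * (⨆ p : Set.Icc p₁ p₂, ‖ut p‖) +
          (4 * (⨆ p : Set.Icc p₁ p₂, ‖ut p‖) + ∫ p in p₁..p₂, ‖deriv ut p‖) *
          (⨅ p : Set.Icc p₁ p₂, |deriv ψ p|)⁻¹) * ω ^ (-μ) := by
  intro ω hω
  have hψd : ∀ x ∈ Icc p₁ p₂, HasDerivAt ψ (deriv ψ x) x := fun x hx =>
    (differentiableAt_of_deriv_ne_zero (hψ'0 x hx)).hasDerivAt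
  have hφc : ContinuousOn (deriv ψ) (Icc p₁ p₂) :=
    (hψ.of_le one_le_two).continuousOn_deriv_Icc hp fun x hx => (hψd x hx).differentiableAt
  have hφd : ∀ x ∈ Ioo p₁ p₂, DifferentiableAt ℝ (deriv ψ) x := fun x hx =>
    ((hψ.mono Ioo_subset_Icc_self).deriv_of_isOpen isOpen_Ioo (m := 1) (by norm_num)
      |>.differentiableOn one_ne_zero x hx).differentiableAt (isOpen_Ioo.mem_nhds hx)
  have hm0 : 0 < ⨅ p : Icc p₁ p₂, |deriv ψ p| :=
    isCompact_Icc.lt_ciInf_of_continuousOn (nonempty_Icc.2 hp.le) hφc.abs fun x hx =>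
      abs_pos.2 (hψ'0 x hx)
  have hm : ∀ x ∈ Icc p₁ p₂, ⨅ p : Icc p₁ p₂, |deriv ψ p| ≤ |deriv ψ x| := fun x hx =>
    ciInf_le ⟨0, by rintro _ ⟨p, rfl⟩; exact abs_nonneg _⟩ (⟨x, hx⟩ : Icc p₁ p₂)
  calc _ = ‖∫ p in p₁..p₂,
          (((p - p₁) ^ (μ - 1) : ℝ) : ℂ) * ut p * Complex.exp (Complex.I * ω * ψ p)‖ := by
        refine congrArg _ (intervalIntegral.integral_congr_ae (Filter.Eventually.of_forall ?_))
        intro x hx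
        rw [uIoc_of_le hp.le] at hx
        rw [hU x hx]
    _ ≤ _ := norm_integral_rpow_mul_cexp_le hμ hp.le hω hm0 hψd hφc hφd hmono hm hutc
        (fun x hx => (hutd x hx).hasDerivAt) hutint
        fun x hx => isCompact_Icc.le_ciSup_of_continuousOn hutc.norm hx

/-- Non-stationary phase estimate with singular amplitude. -/
theorem stmt_10 (μ p₁ p₂ : ℝ) (hμ : μ ∈ Set.Ioc (0:ℝ) 1) (hp : p₁ < p₂)
    (ψ : ℝ → ℝ) (hψ : ContDiffOn ℝ 2 ψ (Set.Icc p₁ p₂))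
    (hψ'0 : ∀ p ∈ Set.Icc p₁ p₂, deriv ψ p ≠ 0)
    (hmono : MonotoneOn (deriv ψ) (Set.Icc p₁ p₂) ∨
      AntitoneOn (deriv ψ) (Set.Icc p₁ p₂))
    (U ut : ℝ → ℂ)
    (hU : ∀ p ∈ Set.Ioc p₁ p₂, U p = ((p - p₁) ^ (μ - 1) : ℝ) * ut p)
    (hutc : ContinuousOn ut (Set.Icc p₁ p₂))
    (hutd : ∀ p ∈ Set.Ioo p₁ p₂, DifferentiableAt ℝ ut p)
    (hutint : IntervalIntegrable (deriv ut) volume p₁ p₂)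
    (hut0 : μ ≠ 1 → ut p₁ ≠ 0) :
    ∀ ω : ℝ, 0 < ω →
      ‖∫ p in p₁..p₂, U p * Complex.exp (Complex.I * ω * ψ p)‖ ≤
        ((1 / μ) * (⨆ p : Set.Icc p₁ p₂, ‖ut p‖) +
          (4 * (⨆ p : Set.Icc p₁ p₂, ‖ut p‖) + ∫ p in p₁..p₂, ‖deriv ut p‖) *
          (⨅ p : Set.Icc p₁ p₂, |deriv ψ p|)⁻¹) * ω ^ (-μ) :=
  stmt_10_general μ p₁ p₂ hμ hp ψ hψ hψ'0 hmono U ut hU hutc hutd hutint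
end
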